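/- Let Γ : ℝ → ℝ² be a β-periodic, twice continuously differentiable curve with |Γ'(s)| = 1 for all s, injective on [0, β), whose image is the boundary of a bounded open set Ω ⊂ ℝ². Then there exists δ₀ > 0 such that for every s₀ ∈ [0, β] and every 0 < δ < δ₀, the circle {x ∈ ℝ² : |x − Γ(s₀)| = δ} intersects the image of Γ in exactly two points. -/

import Mathlib

/-!
Periodicity bounds `Γ''`, so `Γ'` is `K`-Lipschitz and
`⟪Γ' s, Γ s - Γ s₀⟫ = (s - s₀) + O(K (s - s₀)²)` for a unit-speed curve. Hence for `K ε ≤ 1/4` the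
distance `|Γ s - Γ s₀|` is strictly monotone on each of `[s₀ - ε, s₀]` and `[s₀, s₀ + ε]` and
exceeds `ε / 2` at `s₀ ± ε`, so a circle of radius `δ < ε / 2` about `Γ s₀` meets the arc
`Γ [s₀ - ε, s₀ + ε]` in exactly one point on each side. Off that arc, compactness and injectivity
on a period give `c > 0` with `c ≤ |Γ s - Γ t|` whenever `ε ≤ |s - t| ≤ β / 2`, so circles of
radius `δ < c` meet the curve nowhere else.
-/

open Set

noncomputable section

abbrev R2 : Type := EuclideanSpace ℝ (Fin 2)

open scoped InnerProductSpace NNReal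

namespace Function.Periodic

theorem deriv {E : Type*} [NormedAddCommGroup E] [NormedSpace ℝ E] {f : ℝ → E} {c : ℝ}
    (h : Periodic f c) : Periodic (_root_.deriv f) c := fun x => by
  rw [← deriv_comp_add_const, show (fun y => f (y + c)) = f from funext h]

theorem eq_of_injOn_Ico {α : Type*} {f : ℝ → α} {β u v : ℝ} (h : Periodic f β) (hβ : 0 < β)
    (hinj : InjOn f (Ico 0 β)) (huv : f u = f v) (hlt : |u - v| < β) : u = v := by
  have hmod : ∀ x, f (toIcoMod hβ 0 x) = f x := fun x => by
    rw [← self_sub_toIcoDiv_zsmul, h.sub_zsmul_eq]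
  obtain ⟨n, hn⟩ := (toIcoMod_eq_toIcoMod hβ).1 <|
    hinj (toIcoMod_mem_Ico' hβ u) (toIcoMod_mem_Ico' hβ v) (by rw [hmod, hmod, huv])
  have hn0 : n = 0 := by
    have : |(n : ℝ)| * β < 1 * β := calc
      |(n : ℝ)| * β = |v - u| := by rw [hn, zsmul_eq_mul, abs_mul, abs_of_pos hβ]
      _ < 1 * β := by rwa [abs_sub_comm, one_mul]
    exact Int.abs_lt_one_iff.mp (by exact_mod_cast lt_of_mul_lt_mul_right this hβ.le)
  rw [hn0, zero_smul, sub_eq_zero] at hn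
  exact hn.symm

theorem exists_lipschitzWith_deriv {E : Type*} [NormedAddCommGroup E] [NormedSpace ℝ E]
    {Γ : ℝ → E} {β : ℝ} (h : Periodic Γ β) (hβ : 0 < β) (hΓ : ContDiff ℝ 2 Γ) :
    ∃ K > 0, LipschitzWith K (_root_.deriv Γ) := by
  have hΓ' : ContDiff ℝ 1 (_root_.deriv Γ) := (contDiff_succ_iff_deriv.mp hΓ).2.2
  obtain ⟨C, hC, hbound⟩ := (h.deriv.deriv.isBounded_of_continuous hβ.ne'
    (hΓ'.continuous_deriv le_rfl)).exists_pos_norm_le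
  refine ⟨C.toNNReal, Real.toNNReal_pos.mpr hC,
    lipschitzWith_of_nnnorm_deriv_le (hΓ'.differentiable one_ne_zero) fun x => ?_⟩
  rw [← NNReal.coe_le_coe, coe_nnnorm, Real.coe_toNNReal _ hC.le]
  exact hbound _ (mem_range_self x)

theorem exists_pos_le_dist {α : Type*} [MetricSpace α] {Γ : ℝ → α} {β ε : ℝ} (h : Periodic Γ β)
    (hβ : 0 < β) (hΓ : Continuous Γ) (hinj : InjOn Γ (Ico 0 β)) (hε : 0 < ε) :
    ∃ c > 0, ∀ s t, ε ≤ |s - t| → |s - t| ≤ β / 2 → c ≤ dist (Γ s) (Γ t) := by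
  set S := Icc 0 β ×ˢ (Icc (-(β / 2)) (β / 2) \ Ioo (-ε) ε)
  have hS : IsCompact S := isCompact_Icc.prod (isCompact_Icc.diff isOpen_Ioo)
  have hpos : ∀ p ∈ S, 0 < dist (Γ (p.1 + p.2)) (Γ p.1) := by
    rintro ⟨t, x⟩ ⟨-, ⟨hx₁, hx₂⟩, hxε⟩
    refine dist_pos.mpr fun hx => hxε ?_
    have hx0 : t + x = t := h.eq_of_injOn_Ico hβ hinj hx
      (by rw [add_sub_cancel_left, abs_lt]; constructor <;> linarith)
    constructor <;> linarith
  obtain ⟨c, hc, hcS⟩ := hS.exists_forall_le' (by fun_prop : Continuous fun p : ℝ × ℝ =>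
    dist (Γ (p.1 + p.2)) (Γ p.1)).continuousOn hpos
  refine ⟨c, hc, fun s t hεst hstβ => ?_⟩
  have hshift : Periodic (fun u => dist (Γ (u + (s - t))) (Γ u)) β := fun u => by
    simp only [add_right_comm u β, h _]
  obtain ⟨u, hu, hut⟩ := hshift.exists_mem_Ico₀ hβ t
  have hst : dist (Γ s) (Γ t) = dist (Γ (u + (s - t))) (Γ u) := by
    rw [← hut, add_sub_cancel]
  rw [hst]
  refine hcS (u, s - t) ⟨Ico_subset_Icc_self hu, abs_le.mp hstβ, fun hlt => ?_⟩
  exact (abs_lt.mpr hlt).not_ge hεst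

theorem sphere_inter_range_eq {α : Type*} [PseudoMetricSpace α] {Γ : ℝ → α} {β ε c δ : ℝ}
    (h : Periodic Γ β) (hβ : 0 < β)
    (hsep : ∀ s t, ε ≤ |s - t| → |s - t| ≤ β / 2 → c ≤ dist (Γ s) (Γ t)) (hδ : δ < c) (s₀ : ℝ) :
    Metric.sphere (Γ s₀) δ ∩ range Γ = Metric.sphere (Γ s₀) δ ∩ Γ '' Icc (s₀ - ε) (s₀ + ε) := by
  refine subset_antisymm ?_ (inter_subset_inter_right _ (image_subset_range _ _))
  rintro _ ⟨hx, s, rfl⟩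
  obtain ⟨t, ht, hts⟩ := h.exists_mem_Ico hβ s (s₀ - β / 2)
  rw [Metric.mem_sphere, hts] at hx
  have htε : |t - s₀| < ε := by
    by_contra! hle
    have := hsep t s₀ hle (abs_le.mpr ⟨by linarith [ht.1], by linarith [ht.2]⟩)
    linarith
  obtain ⟨h₁, h₂⟩ := abs_sub_lt_iff.mp htε
  exact ⟨hts ▸ hx, t, ⟨by linarith, by linarith⟩, hts.symm⟩

end Function.Periodic

section Taylor

variable {E : Type*} [NormedAddCommGroup E] [NormedSpace ℝ E]

theorem LipschitzWith.norm_sub_sub_smul_deriv_le {f : ℝ → E} {K : ℝ≥0} (hf : Differentiable ℝ f)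
    (hK : LipschitzWith K (deriv f)) (s t : ℝ) :
    ‖f s - f t - (s - t) • deriv f t‖ ≤ K * (s - t) ^ 2 := by
  set g : ℝ → E := fun u => f u - u • deriv f t
  have hg : ∀ u, HasDerivAt g (deriv f u - deriv f t) u := fun u => by
    have := (hf u).hasDerivAt.sub ((hasDerivAt_id' u).smul_const (deriv f t))
    rwa [one_smul] at this
  have hbound : ∀ u ∈ uIcc t s, ‖deriv f u - deriv f t‖ ≤ K * |s - t| := fun u hu => by
    rw [← dist_eq_norm]
    calc dist (deriv f u) (deriv f t) ≤ K * dist u t := hK.dist_le_mul u t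
      _ ≤ K * |s - t| := by
        rw [Real.dist_eq]; exact mul_le_mul_of_nonneg_left (abs_sub_left_of_mem_uIcc hu) K.2
  calc ‖f s - f t - (s - t) • deriv f t‖ = ‖g s - g t‖ := by
        simp only [g, sub_smul]; abel_nf
    _ ≤ K * |s - t| * ‖s - t‖ := (convex_uIcc t s).norm_image_sub_le_of_norm_hasDerivWithin_le
        (fun u _ => (hg u).hasDerivWithinAt) hbound left_mem_uIcc right_mem_uIcc
    _ = K * (s - t) ^ 2 := by rw [Real.norm_eq_abs, mul_assoc, abs_mul_abs_self, sq]

end Taylor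

section UnitSpeed

variable {E : Type*} [NormedAddCommGroup E] [InnerProductSpace ℝ E] {Γ : ℝ → E} {K : ℝ≥0}

theorem abs_inner_deriv_sub_sub_le (hd : Differentiable ℝ Γ) (hunit : ∀ s, ‖deriv Γ s‖ = 1)
    (hK : LipschitzWith K (deriv Γ)) (s s₀ : ℝ) :
    |⟪deriv Γ s, Γ s - Γ s₀⟫_ℝ - (s - s₀)| ≤ K * (s - s₀) ^ 2 := by
  have hsplit : ⟪deriv Γ s, Γ s - Γ s₀⟫_ℝ - (s - s₀) =
      -⟪deriv Γ s, Γ s₀ - Γ s - (s₀ - s) • deriv Γ s⟫_ℝ := by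
    simp only [inner_sub_right, real_inner_smul_right, real_inner_self_eq_norm_sq, hunit]
    ring
  rw [hsplit, abs_neg]
  calc _ ≤ ‖deriv Γ s‖ * ‖Γ s₀ - Γ s - (s₀ - s) • deriv Γ s‖ := abs_real_inner_le_norm _ _
    _ ≤ K * (s₀ - s) ^ 2 := by
      rw [hunit, one_mul]; exact hK.norm_sub_sub_smul_deriv_le hd s₀ s
    _ = K * (s - s₀) ^ 2 := by ring

theorem abs_sub_le_two_mul_dist (hd : Differentiable ℝ Γ) (hunit : ∀ s, ‖deriv Γ s‖ = 1)
    (hK : LipschitzWith K (deriv Γ)) {s t : ℝ} (h : K * |s - t| ≤ 1 / 2) :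
    |s - t| ≤ 2 * dist (Γ s) (Γ t) := by
  have htaylor := hK.norm_sub_sub_smul_deriv_le hd s t
  have htangent : ‖(s - t) • deriv Γ t‖ = |s - t| := by
    rw [norm_smul, hunit, mul_one, Real.norm_eq_abs]
  have htri := norm_sub_norm_le ((s - t) • deriv Γ t) (Γ s - Γ t)
  rw [norm_sub_rev ((s - t) • deriv Γ t), htangent] at htri
  rw [dist_eq_norm]
  nlinarith [sq_abs (s - t), mul_le_mul_of_nonneg_right h (abs_nonneg (s - t))]

theorem mul_inner_deriv_sub_pos (hd : Differentiable ℝ Γ) (hunit : ∀ s, ‖deriv Γ s‖ = 1)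
    (hK : LipschitzWith K (deriv Γ)) {s s₀ : ℝ} (hs : s ≠ s₀) (h : K * |s - s₀| < 1) :
    0 < (s - s₀) * ⟪deriv Γ s, Γ s - Γ s₀⟫_ℝ := by
  have hclose := abs_inner_deriv_sub_sub_le hd hunit hK s s₀
  have hsq : 0 < (s - s₀) ^ 2 := sq_pos_of_ne_zero (sub_ne_zero.mpr hs)
  have herr : |(s - s₀) * (⟪deriv Γ s, Γ s - Γ s₀⟫_ℝ - (s - s₀))| ≤
      |s - s₀| * (K * (s - s₀) ^ 2) := by
    rw [abs_mul]; gcongr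
  nlinarith [neg_abs_le ((s - s₀) * (⟪deriv Γ s, Γ s - Γ s₀⟫_ℝ - (s - s₀)))]

theorem hasDerivAt_norm_sub_sq (hd : Differentiable ℝ Γ) (s s₀ : ℝ) :
    HasDerivAt (fun s => ‖Γ s - Γ s₀‖ ^ 2) (2 * ⟪deriv Γ s, Γ s - Γ s₀⟫_ℝ) s := by
  rw [real_inner_comm]
  exact ((hd s).hasDerivAt.sub_const (Γ s₀)).norm_sq

theorem strictMonoOn_dist_Icc (hd : Differentiable ℝ Γ) (hunit : ∀ s, ‖deriv Γ s‖ = 1)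
    (hK : LipschitzWith K (deriv Γ)) {r : ℝ} (hr : K * r < 1) (s₀ : ℝ) :
    StrictMonoOn (fun s => dist (Γ s) (Γ s₀)) (Icc s₀ (s₀ + r)) := by
  have hsq : StrictMonoOn (fun s => ‖Γ s - Γ s₀‖ ^ 2) (Icc s₀ (s₀ + r)) := by
    refine strictMonoOn_of_deriv_pos (convex_Icc _ _)
      ((hd.continuous.sub continuous_const).norm.pow 2).continuousOn fun x hx => ?_
    rw [interior_Icc] at hx
    have hclose : K * |x - s₀| < 1 := by
      rw [abs_of_pos (sub_pos.mpr hx.1)]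
      exact lt_of_le_of_lt (by gcongr; linarith [hx.2]) hr
    rw [(hasDerivAt_norm_sub_sq hd x s₀).deriv]
    have := mul_inner_deriv_sub_pos hd hunit hK hx.1.ne' hclose
    linarith [pos_of_mul_pos_right this (sub_pos.mpr hx.1).le]
  intro a ha b hb hab
  simpa only [dist_eq_norm] using lt_of_pow_lt_pow_left₀ 2 (norm_nonneg _) (hsq ha hb hab)

theorem strictAntiOn_dist_Icc (hd : Differentiable ℝ Γ) (hunit : ∀ s, ‖deriv Γ s‖ = 1)
    (hK : LipschitzWith K (deriv Γ)) {r : ℝ} (hr : K * r < 1) (s₀ : ℝ) :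
    StrictAntiOn (fun s => dist (Γ s) (Γ s₀)) (Icc (s₀ - r) s₀) := by
  have hsq : StrictAntiOn (fun s => ‖Γ s - Γ s₀‖ ^ 2) (Icc (s₀ - r) s₀) := by
    refine strictAntiOn_of_deriv_neg (convex_Icc _ _)
      ((hd.continuous.sub continuous_const).norm.pow 2).continuousOn fun x hx => ?_
    rw [interior_Icc] at hx
    have hclose : K * |x - s₀| < 1 := by
      rw [abs_of_neg (sub_neg.mpr hx.2)]
      exact lt_of_le_of_lt (by gcongr; linarith [hx.1]) hr
    rw [(hasDerivAt_norm_sub_sq hd x s₀).deriv]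
    have := mul_inner_deriv_sub_pos hd hunit hK hx.2.ne hclose
    linarith [neg_of_mul_pos_right this (sub_neg.mpr hx.2).le]
  intro a ha b hb hab
  simpa only [dist_eq_norm] using lt_of_pow_lt_pow_left₀ 2 (norm_nonneg _) (hsq ha hb hab)

theorem encard_sphere_inter_image_Icc (hd : Differentiable ℝ Γ) (hunit : ∀ s, ‖deriv Γ s‖ = 1)
    (hK : LipschitzWith K (deriv Γ)) {ε δ : ℝ} (hKε : K * ε ≤ 1 / 4) (hδ : 0 < δ)
    (hδε : δ < ε / 2) (s₀ : ℝ) :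
    (Metric.sphere (Γ s₀) δ ∩ Γ '' Icc (s₀ - ε) (s₀ + ε)).encard = 2 := by
  have hε : 0 < ε := by linarith
  have hcont : Continuous fun s => dist (Γ s) (Γ s₀) := hd.continuous.dist continuous_const
  have hfar : ∀ s, |s - s₀| = ε → δ ≤ dist (Γ s) (Γ s₀) := fun s hs => by
    have := abs_sub_le_two_mul_dist hd hunit hK (s := s) (t := s₀) (by rw [hs]; linarith)
    linarith
  obtain ⟨a, ha, hda⟩ : ∃ a ∈ Icc (s₀ - ε) s₀, dist (Γ a) (Γ s₀) = δ :=
    intermediate_value_Icc' (by linarith) hcont.continuousOn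
      ⟨by simp [hδ.le], hfar _ (by simp [abs_of_pos hε])⟩
  obtain ⟨b, hb, hdb⟩ : ∃ b ∈ Icc s₀ (s₀ + ε), dist (Γ b) (Γ s₀) = δ :=
    intermediate_value_Icc (by linarith) hcont.continuousOn
      ⟨by simp [hδ.le], hfar _ (by simp [abs_of_pos hε])⟩
  have hab : Γ a ≠ Γ b := by
    intro h
    have hclose : K * |a - b| ≤ 1 / 2 := by
      rw [abs_of_nonpos (by linarith [ha.2, hb.1])]
      nlinarith [ha.1, hb.2, K.coe_nonneg]
    have := abs_sub_le_two_mul_dist hd hunit hK hclose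
    rw [h, dist_self, mul_zero, abs_nonpos_iff, sub_eq_zero] at this
    have has₀ : a = s₀ := le_antisymm ha.2 (this ▸ hb.1)
    rw [has₀, dist_self] at hda
    exact hδ.ne hda
  have hr : K * ε < 1 := by linarith
  suffices Metric.sphere (Γ s₀) δ ∩ Γ '' Icc (s₀ - ε) (s₀ + ε) = {Γ a, Γ b} by
    rw [this, encard_pair hab]
  ext x
  constructor
  · rintro ⟨hx, s, hs, rfl⟩
    rw [Metric.mem_sphere] at hx
    rcases le_total s s₀ with h | h
    · exact .inl (congrArg Γ ((strictAntiOn_dist_Icc hd hunit hK hr s₀).injOn ⟨hs.1, h⟩ ha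
        (hx.trans hda.symm)))
    · exact .inr (congrArg Γ ((strictMonoOn_dist_Icc hd hunit hK hr s₀).injOn ⟨h, hs.2⟩ hb
        (hx.trans hdb.symm)))
  · rintro (rfl | rfl)
    · exact ⟨hda, a, ⟨ha.1, by linarith [ha.2]⟩, rfl⟩
    · exact ⟨hdb, b, ⟨by linarith [hb.1], hb.2⟩, rfl⟩

end UnitSpeed

theorem circle_meets_C2_boundary_in_two_points_general
    (Γ : ℝ → R2) (β : ℝ) (hβ : 0 < β)
    (hper : Function.Periodic Γ β)
    (hsm : ContDiff ℝ 2 Γ)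
    (hunit : ∀ s, ‖deriv Γ s‖ = 1)
    (hinj : Set.InjOn Γ (Set.Ico 0 β)) :
    ∃ δ₀ > 0, ∀ s₀ ∈ Set.Icc (0 : ℝ) β, ∀ δ, 0 < δ → δ < δ₀ →
      (Metric.sphere (Γ s₀) δ ∩ Set.range Γ).encard = 2 := by
  obtain ⟨K, hK, hLip⟩ := hper.exists_lipschitzWith_deriv hβ hsm
  obtain ⟨ε, hε, hKε⟩ : ∃ ε > 0, K * ε = 1 / 4 := ⟨1 / (4 * K), by positivity, by field_simp⟩
  obtain ⟨c, hc, hsep⟩ := hper.exists_pos_le_dist hβ hsm.continuous hinj hε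
  refine ⟨min c (ε / 2), by positivity, fun s₀ _ δ hδ hδ₀ => ?_⟩
  rw [hper.sphere_inter_range_eq hβ hsep (hδ₀.trans_le (min_le_left _ _))]
  exact encard_sphere_inter_image_Icc (hsm.differentiable two_ne_zero) hunit hLip hKε.le hδ
    (hδ₀.trans_le (min_le_right _ _)) s₀

/-- **Two-point intersection of small circles with a `C²` boundary curve.**
If `Γ : ℝ → ℝ²` is a `β`-periodic `C²` curve parametrized by arc length, injective on
`[0,β)`, whose image is the boundary of a bounded open set `Ω`, then there is `δ₀ > 0`
such that for all `s₀ ∈ [0,β]` and `0 < δ < δ₀` the circle of radius `δ` about `Γ s₀`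
meets the image of `Γ` in exactly two points. -/
theorem circle_meets_C2_boundary_in_two_points
    (Ω : Set R2) (hopen : IsOpen Ω) (hbd : Bornology.IsBounded Ω)
    (Γ : ℝ → R2) (β : ℝ) (hβ : 0 < β)
    (hper : Function.Periodic Γ β)
    (hsm : ContDiff ℝ 2 Γ)
    (hunit : ∀ s, ‖deriv Γ s‖ = 1)
    (hinj : Set.InjOn Γ (Set.Ico 0 β))
    (himg : Set.range Γ = frontier Ω) :
    ∃ δ₀ > 0, ∀ s₀ ∈ Set.Icc (0 : ℝ) β, ∀ δ, 0 < δ → δ < δ₀ →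
      (Metric.sphere (Γ s₀) δ ∩ Set.range Γ).encard = 2 :=
  circle_meets_C2_boundary_in_two_points_general Γ β hβ hper hsm hunit hinj
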